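/- arXiv:2206.01434 — 2 statements merged into one kernel-verified Lean document; each statement's English description precedes it below -/
import Mathlib

section
/- Let M be a compact connected Riemannian manifold without boundary, ρ_1,…,ρ_n smooth positive functions with Σ ρ_j = 1, and (α_1,…,α_n) a nonzero n-tuple of smooth 1-forms with d*(Σ_j ρ_j α_j) = 0. Then Σ_j ∫_M (α_j, α_j) ρ_j vol_M > 0; in particular the pairing ⟨[α], u⟩ = Σ_j ∫_M α_j(u_j) ρ_j vol_M with u = α^♯ is strictly positive, so the map from cosets to functionals is injective. -/
open MeasureTheory
open scoped RealInnerProductSpace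

noncomputable section

/-- Euclidean space `ℝᵈ`; the flat model for the manifold. -/
abbrev E (d : ℕ) := EuclideanSpace ℝ (Fin d)


/-- Periodicity with period 1 in each coordinate direction: the model for functions
(and tensor fields, written in flat coordinates) on the compact torus `ℝᵈ/ℤᵈ`,
a compact connected manifold without boundary. -/
def Per {d : ℕ} {α : Type*} (g : E d → α) : Prop :=
  ∀ (x : E d) (i : Fin d), g (x + EuclideanSpace.single i (1:ℝ)) = g x

/-- The fundamental domain `[0,1]ᵈ` of the torus, over which integrals
`∫_M` are computed. -/
def cube (d : ℕ) : Set (E d) := {x | ∀ i, x i ∈ Set.Icc (0:ℝ) 1}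

/-- Divergence of a vector field with respect to the Euclidean volume. -/
def dvg {d : ℕ} (u : E d → E d) (x : E d) : ℝ :=
  ∑ i, fderiv ℝ (fun y => u y i) x (EuclideanSpace.single i 1)


section Aux

/-- integer shifts preserve periodic functions -/
lemma per_int_shift {d : ℕ} {β : Type*} {g : E d → β} (hg : Per g) (i : Fin d) (m : ℤ) :
    ∀ x : E d, g (x + (m:ℝ) • EuclideanSpace.single i (1:ℝ)) = g x := by
  induction m using Int.induction_on with
  | zero => intro x; simp
  | succ k ih =>
      intro x
      push_cast at ih ⊢
      have : x + ((k:ℝ)+1) • EuclideanSpace.single i (1:ℝ)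
          = (x + (k:ℝ) • EuclideanSpace.single i (1:ℝ)) + EuclideanSpace.single i (1:ℝ) := by
        rw [add_smul, one_smul, add_assoc]
      rw [this, hg, ih]
  | pred k ih =>
      intro x
      push_cast at ih ⊢
      have h2 := hg (x + (-(k:ℝ)-1) • EuclideanSpace.single i (1:ℝ)) i
      have h4 : x + (-(k:ℝ)-1) • EuclideanSpace.single i (1:ℝ) + EuclideanSpace.single i (1:ℝ)
          = x + (-(k:ℝ)) • EuclideanSpace.single i (1:ℝ) := by
        rw [sub_smul, one_smul]; abel
      rw [h4] at h2
      rw [← h2, ih]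

lemma per_sum_shift {d : ℕ} {β : Type*} {g : E d → β} (hg : Per g) (c : Fin d → ℤ)
    (s : Finset (Fin d)) :
    ∀ x : E d, g (x + ∑ i ∈ s, ((c i : ℝ)) • EuclideanSpace.single i (1:ℝ)) = g x := by
  induction s using Finset.induction_on with
  | empty => intro x; simp
  | @insert a s ha ih =>
      intro x
      rw [Finset.sum_insert ha]
      have h5 : x + (((c a : ℝ)) • EuclideanSpace.single a (1:ℝ)
            + ∑ i ∈ s, ((c i : ℝ)) • EuclideanSpace.single i (1:ℝ))
          = (x + ∑ i ∈ s, ((c i : ℝ)) • EuclideanSpace.single i (1:ℝ))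
            + ((c a : ℝ)) • EuclideanSpace.single a (1:ℝ) := by
        abel
      rw [h5, per_int_shift hg a (c a), ih]

lemma reduce_to_cube {d : ℕ} (x : E d) :
    ∃ y ∈ cube d, ∀ {β : Type} (g : E d → β), Per g → g y = g x := by
  refine ⟨x + ∑ i, ((-⌊x i⌋ : ℝ)) • EuclideanSpace.single i (1:ℝ), ?_, ?_⟩
  · intro j
    have hsum : (∑ i, ((-⌊x i⌋ : ℝ)) • EuclideanSpace.single i (1:ℝ)) j
        = ∑ i, (((-⌊x i⌋ : ℝ)) • EuclideanSpace.single i (1:ℝ)) j := by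
      rw [WithLp.ofLp_sum, Finset.sum_apply]
    have hyj : (x + ∑ i, ((-⌊x i⌋ : ℝ)) • EuclideanSpace.single i (1:ℝ)) j
        = Int.fract (x j) := by
      show x j + _ = _
      change x j + (∑ i, ((-⌊x i⌋ : ℝ)) • EuclideanSpace.single i (1:ℝ)) j = _
      rw [hsum]
      simp [EuclideanSpace.single_apply, mul_ite, Int.fract, sub_eq_add_neg]
    rw [hyj]
    exact ⟨Int.fract_nonneg _, le_of_lt (Int.fract_lt_one _)⟩
  · intro β g hg
    have := per_sum_shift hg (fun i => -⌊x i⌋) Finset.univ x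
    simpa using this

lemma isCompact_cube (d : ℕ) : IsCompact (cube d) := by
  have h : cube d = (EuclideanSpace.equiv (Fin d) ℝ).toHomeomorph ⁻¹'
      (Set.univ.pi fun _ => Set.Icc (0:ℝ) 1) := by
    ext x
    simp only [Set.mem_preimage, Set.mem_pi, Set.mem_univ, true_implies]
    exact Iff.rfl
  rw [h]
  exact (EuclideanSpace.equiv (Fin d) ℝ).toHomeomorph.isCompact_preimage.mpr
    (isCompact_univ_pi fun _ => isCompact_Icc)

def openBox (d : ℕ) : Set (E d) := {x | ∀ i, x i ∈ Set.Ioo (0:ℝ) 1}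

lemma isOpen_openBox (d : ℕ) : IsOpen (openBox d) := by
  have h : openBox d = ⋂ i, (fun x : E d => x i) ⁻¹' Set.Ioo (0:ℝ) 1 := by
    ext x; simp [openBox]
  rw [h]
  exact isOpen_iInter_of_finite fun i =>
    (isOpen_Ioo).preimage (EuclideanSpace.proj i).continuous

lemma openBox_subset_cube (d : ℕ) : openBox d ⊆ cube d := fun x hx i =>
  ⟨le_of_lt (hx i).1, le_of_lt (hx i).2⟩

lemma nonempty_inter_openBox {d : ℕ} {U : Set (E d)} (hU : IsOpen U) {y : E d}
    (hy : y ∈ cube d) (hyU : y ∈ U) : (U ∩ openBox d).Nonempty := by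
  set c : E d := ∑ i, ((1/2:ℝ)) • EuclideanSpace.single i (1:ℝ) with hc_def
  have hc : ∀ j, c j = 1/2 := by
    intro j
    have hsum : c j = ∑ i, (((1/2:ℝ)) • EuclideanSpace.single i (1:ℝ)) j := by
      rw [hc_def, WithLp.ofLp_sum, Finset.sum_apply]
    rw [hsum]
    simp [EuclideanSpace.single_apply, mul_ite]
  have hcont : Continuous fun t : ℝ => y + t • (c - y) := by continuity
  have hmem : (fun t : ℝ => y + t • (c - y)) ⁻¹' U ∈ nhds (0:ℝ) :=
    (hU.preimage hcont).mem_nhds (by simp [hyU])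
  obtain ⟨ε, hε, hball⟩ := Metric.mem_nhds_iff.mp hmem
  set t := min (ε/2) 1 with ht_def
  have ht0 : 0 < t := lt_min (by linarith) one_pos
  have ht1 : t ≤ 1 := min_le_right _ _
  have htball : t ∈ Metric.ball (0:ℝ) ε := by
    rw [Metric.mem_ball, Real.dist_eq, sub_zero, abs_of_pos ht0]
    calc t ≤ ε/2 := min_le_left _ _
    _ < ε := by linarith
  refine ⟨y + t • (c - y), hball htball, ?_⟩
  intro j
  have hcoord : (y + t • (c - y)) j = y j + t * (c j - y j) := by simp
  rw [hcoord, hc j]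
  obtain ⟨h0, h1⟩ := hy j
  constructor
  · nlinarith
  · nlinarith

end Aux

/-- if `(α₁,…,αₙ)` is a nonzero tuple of smooth 1-forms with
`d*(Σⱼ ρⱼ αⱼ) = 0` (co-closed representative), and `ρⱼ > 0` with `Σ ρⱼ = 1`, then
`Σⱼ ∫_M (αⱼ,αⱼ) ρⱼ vol > 0`.  In particular the pairing `⟨[α], u⟩` with
`u = α^♯` (which, under the flat identification, is this same quantity) is
strictly positive, so the map from cosets to functionals on multiphase
divergence-free fields is injective. -/
theorem coclosed_representative_pairing_pos
    {d n : ℕ} (ρ : Fin n → E d → ℝ) (α : Fin n → E d → E d)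
    (hρ : ∀ j, ContDiff ℝ (⊤ : ℕ∞) (ρ j)) (hρp : ∀ j, Per (ρ j))
    (hρpos : ∀ j x, 0 < ρ j x) (hρsum : ∀ x, ∑ j, ρ j x = 1)
    (hα : ∀ j, ContDiff ℝ (⊤ : ℕ∞) (α j)) (hαp : ∀ j, Per (α j))
    (hne : ∃ j x, α j x ≠ 0)
    (hcc : ∀ x, dvg (fun y => ∑ j, ρ j y • α j y) x = 0) :
    0 < ∑ j, ∫ x in cube d, ⟪α j x, α j x⟫ * ρ j x := by
  set f : Fin n → E d → ℝ := fun j x => ⟪α j x, α j x⟫ * ρ j x with hf_def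
  have hfc : ∀ j, Continuous (f j) := fun j =>
    ((hα j).continuous.inner (hα j).continuous).mul (hρ j).continuous
  have hf0 : ∀ j x, 0 ≤ f j x := fun j x =>
    mul_nonneg real_inner_self_nonneg (hρpos j x).le
  have hmeas : MeasurableSet (cube d) := (isCompact_cube d).isClosed.measurableSet
  have hint : ∀ j, IntegrableOn (f j) (cube d) :=
    fun j => (hfc j).continuousOn.integrableOn_compact (isCompact_cube d)
  obtain ⟨j0, x0, hx0⟩ := hne
  obtain ⟨y, hy, hper⟩ := reduce_to_cube x0
  have hy0 : α j0 y ≠ 0 := by rw [hper (α j0) (hαp j0)]; exact hx0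
  apply Finset.sum_pos'
  · intro j _
    exact setIntegral_nonneg hmeas fun x _ => hf0 j x
  · refine ⟨j0, Finset.mem_univ j0, ?_⟩
    rw [setIntegral_pos_iff_support_of_nonneg_ae (ae_of_all _ (hf0 j0)) (hint j0)]
    set U : Set (E d) := {x | 0 < f j0 x} with hU_def
    have hUopen : IsOpen U := isOpen_lt continuous_const (hfc j0)
    have hyU : y ∈ U := by
      have h1 : (0:ℝ) < ⟪α j0 y, α j0 y⟫ :=
        lt_of_le_of_ne real_inner_self_nonneg
          (fun h => hy0 (inner_self_eq_zero.mp h.symm))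
      exact mul_pos h1 (hρpos j0 y)
    obtain ⟨z, hzU, hzB⟩ := nonempty_inter_openBox hUopen hy hyU
    have hpos : 0 < volume (U ∩ openBox d) :=
      (hUopen.inter (isOpen_openBox d)).measure_pos volume ⟨z, hzU, hzB⟩
    refine lt_of_lt_of_le hpos (measure_mono ?_)
    rintro w ⟨hwU, hwB⟩
    exact ⟨ne_of_gt hwU, openBox_subset_cube d hwB⟩
end
end

section
/- Let M be a compact connected Riemannian manifold without boundary, and ρ_1,…,ρ_n positive smooth functions with Σ ρ_j = 1. If u_1,…,u_n are smooth vector fields with Σ_j div(ρ_j u_j) = 0 and each u_j satisfies ∂_t u_j + ∇_{u_j} u_j = −grad p for a common function p, and ∂_t ρ_j = −div(ρ_j u_j), then p satisfies the Poisson equation −Δp = div Σ_j (ρ_j ∇_{u_j} u_j + div(ρ_j u_j) u_j), and hence is determined by the u_j and ρ_j uniquely up to an additive constant. -/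
open MeasureTheory
open scoped RealInnerProductSpace

noncomputable section

section aux
variable {d : ℕ} {G : Type*} [NormedAddCommGroup G] [NormedSpace ℝ G]

lemma hasDerivAt_slice {F : ℝ × E d → G} (hF : ContDiff ℝ (⊤ : ℕ∞) F) (t : ℝ) (x : E d) :
    HasDerivAt (fun s => F (s, x)) (fderiv ℝ F (t, x) (1, 0)) t :=
  (hF.differentiable (by simp) (t, x)).hasFDerivAt.comp_hasDerivAt t
    ((hasDerivAt_id t).prodMk (hasDerivAt_const t x))

lemma hasFDerivAt_slice {F : ℝ × E d → G} (hF : ContDiff ℝ (⊤ : ℕ∞) F) (t : ℝ) (x : E d) :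
    HasFDerivAt (fun y => F (t, y))
      ((fderiv ℝ F (t, x)).comp (ContinuousLinearMap.inr ℝ ℝ (E d))) x :=
  (hF.differentiable (by simp) (t, x)).hasFDerivAt.comp x (hasFDerivAt_prodMk_right t x)

lemma fderiv_slice {F : ℝ × E d → G} (hF : ContDiff ℝ (⊤ : ℕ∞) F) (t : ℝ) (x : E d) (v : E d) :
    fderiv ℝ (fun y => F (t, y)) x v = fderiv ℝ F (t, x) (0, v) := by
  rw [(hasFDerivAt_slice hF t x).fderiv]; rfl

lemma deriv_slice {F : ℝ × E d → G} (hF : ContDiff ℝ (⊤ : ℕ∞) F) (t : ℝ) (x : E d) :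
    deriv (fun s => F (s, x)) t = fderiv ℝ F (t, x) (1, 0) :=
  (hasDerivAt_slice hF t x).deriv

lemma contDiff_fderiv {F : ℝ × E d → G} (hF : ContDiff ℝ (⊤ : ℕ∞) F) :
    ContDiff ℝ (⊤ : ℕ∞) (fderiv ℝ F) := hF.fderiv_right (by simp)

/-- The `y`-derivative of `y ↦ ∂ₛF(s,y)|_{s=t}` exists. -/
lemma mixed_hasFDerivAt {F : ℝ × E d → G} (hF : ContDiff ℝ (⊤ : ℕ∞) F) (t : ℝ) (x : E d) :
    HasFDerivAt (fun y => deriv (fun s => F (s, y)) t)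
      (((fderiv ℝ (fderiv ℝ F) (t, x)).comp
        (ContinuousLinearMap.inr ℝ ℝ (E d))).flip (1, 0)) x := by
  have h := (hasFDerivAt_slice (contDiff_fderiv hF) t x).clm_apply
    (hasFDerivAt_const ((1:ℝ), (0 : E d)) x)
  have hfun : (fun y => deriv (fun s => F (s, y)) t)
      = fun y => fderiv ℝ F (t, y) (1, 0) := funext fun y => deriv_slice hF t y
  rw [hfun]
  refine h.congr_fderiv ?_
  ext v
  simp

/-- Mixed partial derivatives commute. -/
lemma mixed_hasDerivAt {F : ℝ × E d → G} (hF : ContDiff ℝ (⊤ : ℕ∞) F) (t : ℝ) (x : E d) (v : E d) :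
    HasDerivAt (fun s => fderiv ℝ (fun y => F (s, y)) x v)
      (fderiv ℝ (fun y => deriv (fun s => F (s, y)) t) x v) t := by
  have hfun : (fun s => fderiv ℝ (fun y => F (s, y)) x v)
      = fun s => fderiv ℝ F (s, x) (0, v) := funext fun s => fderiv_slice hF s x v
  rw [hfun]
  have h := (hasDerivAt_slice (contDiff_fderiv hF) t x).clm_apply
    (hasDerivAt_const t ((0:ℝ), v))
  simp only [map_zero, add_zero] at h
  convert h using 1
  rw [(mixed_hasFDerivAt hF t x).fderiv]
  have hsymm := (hF.contDiffAt (x := (t, x))).isSymmSndFDerivAt ((by rw [minSmoothness_of_isRCLikeNormedField]; exact WithTop.coe_le_coe.mpr le_top))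
  simpa using (hsymm (0, v) (1, 0))

end aux

/-- for a multiphase fluid with densities `ρⱼ > 0`, `Σ ρⱼ = 1`,
velocities `uⱼ` with `Σⱼ div(ρⱼ uⱼ) = 0`, momentum equations
`∂_t uⱼ + ∇_{uⱼ} uⱼ = −∇p` with a common pressure `p`, and continuity
equations `∂_t ρⱼ = −div(ρⱼ uⱼ)`, the pressure satisfies the Poisson equation
`−Δp = div Σⱼ (ρⱼ ∇_{uⱼ}uⱼ + div(ρⱼ uⱼ) uⱼ)` and is determined by the `uⱼ, ρⱼ`
uniquely up to an additive constant (at each time). -/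
theorem pressure_poisson_equation
    {d n : ℕ} (ρ : ℝ → Fin n → E d → ℝ) (u : ℝ → Fin n → E d → E d)
    (p : ℝ → E d → ℝ)
    (hρ : ∀ j, ContDiff ℝ (⊤ : ℕ∞) (fun q : ℝ × E d => ρ q.1 j q.2))
    (hu : ∀ j, ContDiff ℝ (⊤ : ℕ∞) (fun q : ℝ × E d => u q.1 j q.2))
    (hp : ContDiff ℝ (⊤ : ℕ∞) (fun q : ℝ × E d => p q.1 q.2))
    (hρp : ∀ t j, Per (ρ t j)) (hup : ∀ t j, Per (u t j)) (hpp : ∀ t, Per (p t))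
    (hρpos : ∀ t j x, 0 < ρ t j x) (hρsum : ∀ t x, ∑ j, ρ t j x = 1)
    (hdiv : ∀ t x, ∑ j, dvg (fun y => ρ t j y • u t j y) x = 0)
    (hmom : ∀ t j x, deriv (fun s => u s j x) t + fderiv ℝ (u t j) x (u t j x)
              = - gradient (p t) x)
    (hcont : ∀ t j x, deriv (fun s => ρ s j x) t
              = - dvg (fun y => ρ t j y • u t j y) x) :
    (∀ t x, - dvg (fun y => gradient (p t) y) x
        = dvg (fun y => ∑ j, (ρ t j y • fderiv ℝ (u t j) y (u t j y)
            + dvg (fun z => ρ t j z • u t j z) y • u t j y)) x)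
    ∧
    (∀ q : ℝ → E d → ℝ, ContDiff ℝ (⊤ : ℕ∞) (fun w : ℝ × E d => q w.1 w.2) →
      (∀ t, Per (q t)) →
      (∀ t j x, deriv (fun s => u s j x) t + fderiv ℝ (u t j) x (u t j x)
          = - gradient (q t) x) →
      ∀ t, ∃ c : ℝ, ∀ x, q t x = p t x + c) := by
  -- the index set is nonempty since the densities sum to 1
  have hne : Nonempty (Fin n) := by
    rcases Nat.eq_zero_or_pos n with rfl | hn
    · exfalso
      have := hρsum 0 0
      simp at this
    · exact ⟨⟨0, hn⟩⟩
  obtain ⟨j0⟩ := hne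
  constructor
  · -- the Poisson equation
    intro t x
    set M : ℝ × E d → E d := fun w => ∑ j, ρ w.1 j w.2 • u w.1 j w.2 with hMdef
    have hMc : ContDiff ℝ (⊤ : ℕ∞) M := ContDiff.sum fun j _ => (hρ j).smul (hu j)
    have hMic : ∀ i : Fin d, ContDiff ℝ (⊤ : ℕ∞) (fun w => M w i) := fun i =>
      ((EuclideanSpace.proj i : E d →L[ℝ] ℝ).contDiff).comp hMc
    -- time derivatives of ρ and u exist
    have Hρ : ∀ (s : ℝ) j y, HasDerivAt (fun s' => ρ s' j y)
        (deriv (fun s' => ρ s' j y) s) s := fun s j y =>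
      (hasDerivAt_slice (hρ j) s y).differentiableAt.hasDerivAt
    have Hu : ∀ (s : ℝ) j y, HasDerivAt (fun s' => u s' j y)
        (deriv (fun s' => u s' j y) s) s := fun s j y =>
      (hasDerivAt_slice (hu j) s y).differentiableAt.hasDerivAt
    -- Step 1: rewrite the integrand using the momentum and continuity equations
    have key : (fun y => ∑ j, (ρ t j y • fderiv ℝ (u t j) y (u t j y)
            + dvg (fun z => ρ t j z • u t j z) y • u t j y))
        = fun y => - gradient (p t) y - deriv (fun s => M (s, y)) t := by
      funext y
      have hj : ∀ j : Fin n, ρ t j y • fderiv ℝ (u t j) y (u t j y)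
          + dvg (fun z => ρ t j z • u t j z) y • u t j y
          = ρ t j y • (- gradient (p t) y) - deriv (fun s => ρ s j y • u s j y) t := by
        intro j
        have hm : fderiv ℝ (u t j) y (u t j y)
            = - gradient (p t) y - deriv (fun s => u s j y) t := by
          rw [← hmom t j y]; abel
        have hc : dvg (fun z => ρ t j z • u t j z) y = - deriv (fun s => ρ s j y) t := by
          have := hcont t j y; linarith
        have hprod : deriv (fun s => ρ s j y • u s j y) t
            = ρ t j y • deriv (fun s => u s j y) t
              + deriv (fun s => ρ s j y) t • u t j y :=
          ((Hρ t j y).smul (Hu t j y)).deriv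
        rw [hm, hc, hprod]
        module
      rw [Finset.sum_congr rfl fun j _ => hj j, Finset.sum_sub_distrib, ← Finset.sum_smul,
        hρsum t y, one_smul]
      congr 1
      have hsum : HasDerivAt (fun s => M (s, y))
          (∑ j, (ρ t j y • deriv (fun s => u s j y) t
            + deriv (fun s => ρ s j y) t • u t j y)) t :=
        HasDerivAt.fun_sum fun j _ => (Hρ t j y).smul (Hu t j y)
      rw [hsum.deriv]
      exact Finset.sum_congr rfl fun j _ => ((Hρ t j y).smul (Hu t j y)).deriv
    rw [key]
    -- Step 2: compute componentwise
    have hcomp : ∀ i : Fin d, (fun y => (- gradient (p t) y - deriv (fun s => M (s, y)) t) i)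
        = fun y => - (gradient (p t) y i) - deriv (fun s => M (s, y) i) t := by
      intro i
      funext y
      have hD := hasDerivAt_slice hMc t y
      have hDi := ((EuclideanSpace.proj i : E d →L[ℝ] ℝ).hasFDerivAt).comp_hasDerivAt t hD
      have hDi' : HasDerivAt (fun s => M (s, y) i) ((fderiv ℝ M (t, y)) (1, 0) i) t := hDi
      have h1 : deriv (fun s => M (s, y) i) t = (deriv (fun s => M (s, y)) t) i := by
        rw [hD.deriv]
        exact hDi'.deriv
      rw [h1]
      rfl
    -- smoothness of the gradient of p
    have hps : ContDiff ℝ (⊤ : ℕ∞) (fun y => p t y) :=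
      hp.comp (contDiff_const.prodMk contDiff_id)
    have hgradc : ContDiff ℝ (⊤ : ℕ∞) (fun y => gradient (p t) y) := by
      show ContDiff ℝ (⊤ : ℕ∞) fun y => (InnerProductSpace.toDual ℝ (E d)).symm (fderiv ℝ (p t) y)
      exact ((InnerProductSpace.toDual ℝ (E d)).symm.contDiff).comp (hps.fderiv_right (by simp))
    have hgi : ∀ i : Fin d, DifferentiableAt ℝ (fun y => gradient (p t) y i) x := fun i =>
      ((((EuclideanSpace.proj i : E d →L[ℝ] ℝ).contDiff).comp hgradc).differentiable
        (by simp) x)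
    have hmi : ∀ i : Fin d,
        DifferentiableAt ℝ (fun y => deriv (fun s => M (s, y) i) t) x := fun i =>
      (mixed_hasFDerivAt (hMic i) t x).differentiableAt
    -- expand the divergence of the rewritten field
    have hexp : dvg (fun y => - gradient (p t) y - deriv (fun s => M (s, y)) t) x
        = ∑ i, (- fderiv ℝ (fun y => gradient (p t) y i) x (EuclideanSpace.single i 1)
            - fderiv ℝ (fun y => deriv (fun s => M (s, y) i) t) x
              (EuclideanSpace.single i 1)) := by
      unfold dvg
      refine Finset.sum_congr rfl fun i _ => ?_
      rw [hcomp i, fderiv_fun_sub (hgi i).fun_neg (hmi i), fderiv_fun_neg]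
      simp
    rw [hexp, Finset.sum_sub_distrib]
    -- the sum of mixed-derivative terms vanishes since div Σ ρⱼuⱼ ≡ 0
    have hmix0 : ∑ i, fderiv ℝ (fun y => deriv (fun s => M (s, y) i) t) x
        (EuclideanSpace.single i 1) = 0 := by
      have hB : HasDerivAt
          (fun s => ∑ i, fderiv ℝ (fun y => M (s, y) i) x (EuclideanSpace.single i 1))
          (∑ i, fderiv ℝ (fun y => deriv (fun s => M (s, y) i) t) x
            (EuclideanSpace.single i 1)) t :=
        HasDerivAt.fun_sum fun i _ => mixed_hasDerivAt (hMic i) t x (EuclideanSpace.single i 1)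
      have hzero : (fun s => ∑ i, fderiv ℝ (fun y => M (s, y) i) x
          (EuclideanSpace.single i 1)) = fun _ => (0:ℝ) := by
        funext s
        have happ : ∀ i : Fin d, (fun y => M (s, y) i)
            = fun y => ∑ j, ρ s j y * u s j y i := by
          intro i
          funext y
          show (EuclideanSpace.proj i : E d →L[ℝ] ℝ) (∑ j, ρ s j y • u s j y) = _
          rw [map_sum]
          simp
        have hdiffj : ∀ (j : Fin n) (i : Fin d),
            DifferentiableAt ℝ (fun y => ρ s j y * u s j y i) x := by
          intro j i
          have h1 : ContDiff ℝ (⊤ : ℕ∞) (fun y => ρ s j y) :=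
            (hρ j).comp (contDiff_const.prodMk contDiff_id)
          have h2 : ContDiff ℝ (⊤ : ℕ∞) (fun y => u s j y i) :=
            ((EuclideanSpace.proj i : E d →L[ℝ] ℝ).contDiff).comp
              ((hu j).comp (contDiff_const.prodMk contDiff_id))
          exact ((h1.mul h2).differentiable (by simp)) x
        calc ∑ i, fderiv ℝ (fun y => M (s, y) i) x (EuclideanSpace.single i 1)
            = ∑ i, ∑ j, fderiv ℝ (fun y => ρ s j y * u s j y i) x
                (EuclideanSpace.single i 1) := by
              refine Finset.sum_congr rfl fun i _ => ?_
              rw [happ i, fderiv_fun_sum fun j _ => hdiffj j i]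
              simp
          _ = ∑ j, ∑ i, fderiv ℝ (fun y => ρ s j y * u s j y i) x
                (EuclideanSpace.single i 1) := Finset.sum_comm
          _ = ∑ j, dvg (fun y => ρ s j y • u s j y) x := rfl
          _ = 0 := hdiv s x
      rw [hzero] at hB
      exact hB.unique (hasDerivAt_const t 0)
    rw [hmix0, sub_zero]
    unfold dvg
    rw [← Finset.sum_neg_distrib]
  · -- uniqueness of the pressure up to a constant
    intro q hq hqper hqmom t
    have hgr : ∀ x, gradient (q t) x = gradient (p t) x := by
      intro x
      have h1 := hmom t j0 x
      have h2 := hqmom t j0 x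
      exact neg_injective (h2.symm.trans h1)
    have hqd : ∀ x : E d, DifferentiableAt ℝ (q t) x := fun x =>
      (hasFDerivAt_slice hq t x).differentiableAt
    have hpd : ∀ x : E d, DifferentiableAt ℝ (p t) x := fun x =>
      (hasFDerivAt_slice hp t x).differentiableAt
    have hfd : ∀ x, fderiv ℝ (fun y => q t y - p t y) x = 0 := by
      intro x
      have heq : fderiv ℝ (q t) x = fderiv ℝ (p t) x := by
        have := congrArg (InnerProductSpace.toDual ℝ (E d)) (hgr x)
        simpa [gradient] using this
      rw [fderiv_fun_sub (hqd x) (hpd x), heq, sub_self]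
    have hdiff : Differentiable ℝ (fun y => q t y - p t y) := fun x =>
      (hqd x).sub (hpd x)
    refine ⟨q t 0 - p t 0, fun x => ?_⟩
    have := is_const_of_fderiv_eq_zero hdiff hfd x 0
    linarith
end
end
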